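/- arXiv:2303.05965 — 2 statements merged into one kernel-verified Lean document; each statement's English description precedes it below -/
import Mathlib

section
/- With the same hypotheses as the partition-of-unity interpolation bound (0 ≤ u_j ≤ 1, ∑_j u_j ≡ 1, u_j supported in the ρ-ball around v_j, and |f(x) - f(y)| ≤ ε whenever d(x,y) ≤ ρ), for each sample index k one has the improved pointwise bound |f̃(v_k) - f(v_k)| ≤ ε · (1 - u_k(v_k)), where f̃(x) = ∑_j f(v_j) u_j(x). -/
open Finset

theorem stmt_3 {M : Type*} [MetricSpace M] (p : ℕ) (v : Fin p → M)
    (u : Fin p → M → ℝ) (ρ ε : ℝ)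
    (hu01 : ∀ j x, 0 ≤ u j x ∧ u j x ≤ 1)
    (hsum : ∀ x, ∑ j : Fin p, u j x = 1)
    (hsupp : ∀ j x, ρ ≤ dist x (v j) → u j x = 0)
    (f : M → ℝ)
    (hf : ∀ x y, dist x y ≤ ρ → |f x - f y| ≤ ε) :
    ∀ k : Fin p,
      |(∑ j : Fin p, f (v j) * u j (v k)) - f (v k)| ≤ ε * (1 - u k (v k)) := by
  intro k
  have hρ : 0 ≤ ρ := by
    by_contra h
    push_neg at h
    have hz : ∑ j : Fin p, u j (v k) = 0 :=
      Finset.sum_eq_zero fun j _ => hsupp j (v k) (le_trans h.le dist_nonneg)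
    rw [hsum] at hz; norm_num at hz
  have hε : 0 ≤ ε := le_trans (abs_nonneg _) (hf (v k) (v k) (by simpa using hρ))
  have key : (∑ j : Fin p, f (v j) * u j (v k)) - f (v k)
      = ∑ j ∈ Finset.univ.erase k, (f (v j) - f (v k)) * u j (v k) := by
    rw [Finset.sum_erase (f := fun j => (f (v j) - f (v k)) * u j (v k)) Finset.univ (by simp)]
    simp only [sub_mul, Finset.sum_sub_distrib, ← Finset.mul_sum, hsum, mul_one]
  rw [key]
  calc |∑ j ∈ Finset.univ.erase k, (f (v j) - f (v k)) * u j (v k)|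
      ≤ ∑ j ∈ Finset.univ.erase k, |(f (v j) - f (v k)) * u j (v k)| :=
        Finset.abs_sum_le_sum_abs _ _
    _ ≤ ∑ j ∈ Finset.univ.erase k, ε * u j (v k) := by
        apply Finset.sum_le_sum
        intro j _
        rw [abs_mul, abs_of_nonneg (hu01 j (v k)).1]
        rcases eq_or_ne (u j (v k)) 0 with h | h
        · simp [h]
        · apply mul_le_mul_of_nonneg_right _ (hu01 j (v k)).1
          have hd : dist (v k) (v j) ≤ ρ := by
            by_contra hd
            exact h (hsupp j (v k) (le_of_lt (not_le.mp hd)))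
          exact hf (v j) (v k) (by rwa [dist_comm])
    _ = ε * (1 - u k (v k)) := by
        rw [← Finset.mul_sum]
        congr 1
        rw [Finset.sum_erase_eq_sub (Finset.mem_univ k), hsum]
end

section
/- Let u_1,…,u_p : M → [0,1] with ∑_j u_j ≡ 1 and u_j(x) = 0 when d(x,v_j) ≥ ρ, and let c ∈ ℝ^p be coefficients such that |c_k - c_i| ≤ ε whenever d(v_k, v_i) ≤ 2ρ. Define ψ(x) = ∑_k c_k u_k(x). Then for each sample index i, |ψ(v_i) - c_i|² ≤ ε² (1 - u_i(v_i)). -/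
open Finset

theorem stmt_13 {M : Type*} [MetricSpace M] (p : ℕ) (v : Fin p → M)
    (u : Fin p → M → ℝ) (ρ ε : ℝ)
    (hu01 : ∀ j x, 0 ≤ u j x ∧ u j x ≤ 1)
    (hsum : ∀ x, ∑ j : Fin p, u j x = 1)
    (hsupp : ∀ j x, ρ ≤ dist x (v j) → u j x = 0)
    (c : Fin p → ℝ)
    (hc : ∀ k i : Fin p, dist (v k) (v i) ≤ 2 * ρ → |c k - c i| ≤ ε) :
    ∀ i : Fin p,
      |(∑ k : Fin p, c k * u k (v i)) - c i| ^ 2 ≤ ε ^ 2 * (1 - u i (v i)) := by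
  intro i
  -- ρ must be positive, else all u vanish at v i contradicting hsum
  have hρ : 0 < ρ := by
    by_contra h
    push_neg at h
    have : (∑ j : Fin p, u j (v i)) = 0 := by
      apply Finset.sum_eq_zero
      intro j _
      exact hsupp j (v i) (h.trans dist_nonneg)
    rw [hsum (v i)] at this
    norm_num at this
  have hε : 0 ≤ ε := by
    have := hc i i (by simp; positivity)
    simpa using this
  -- rewrite the sum
  have key : (∑ k : Fin p, c k * u k (v i)) - c i
      = ∑ k : Fin p, (c k - c i) * u k (v i) := by
    simp only [sub_mul, Finset.sum_sub_distrib, ← Finset.mul_sum, hsum (v i), mul_one]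
  set α := u i (v i) with hα
  have hbound : |(∑ k : Fin p, c k * u k (v i)) - c i| ≤ ε * (1 - α) := by
    rw [key]
    calc |∑ k : Fin p, (c k - c i) * u k (v i)|
        ≤ ∑ k : Fin p, |(c k - c i) * u k (v i)| := Finset.abs_sum_le_sum_abs _ _
      _ ≤ ∑ k : Fin p, (if k = i then 0 else ε * u k (v i)) := by
          apply Finset.sum_le_sum
          intro k _
          by_cases hk : k = i
          · simp [hk]
          · simp only [hk, if_false, abs_mul, abs_of_nonneg (hu01 k (v i)).1]
            by_cases hz : u k (v i) = 0
            · simp [hz]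
            apply mul_le_mul_of_nonneg_right _ (hu01 k (v i)).1
            apply hc
            have hd : dist (v i) (v k) < ρ := by
              by_contra hd
              push_neg at hd
              exact hz (hsupp k (v i) hd)
            calc dist (v k) (v i) = dist (v i) (v k) := dist_comm _ _
              _ ≤ ρ := hd.le
              _ ≤ 2 * ρ := by linarith
      _ = ε * (1 - α) := by
          have : ∀ k : Fin p, (if k = i then (0:ℝ) else ε * u k (v i))
              = ε * u k (v i) - (if k = i then ε * u k (v i) else 0) := by
            intro k; by_cases hk : k = i <;> simp [hk]
          simp only [this, Finset.sum_sub_distrib, Finset.sum_ite_eq' Finset.univ i,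
            Finset.mem_univ, if_true, ← Finset.mul_sum, hsum (v i), ← hα]
          ring
  have h1 : 0 ≤ 1 - α := by have := (hu01 i (v i)).2; simp [hα]; linarith
  have h2 : 1 - α ≤ 1 := by have := (hu01 i (v i)).1; simp [hα]; linarith
  have habs : 0 ≤ |(∑ k : Fin p, c k * u k (v i)) - c i| := abs_nonneg _
  have hsq := mul_self_le_mul_self habs hbound
  nlinarith [sq_nonneg ε, mul_nonneg (mul_nonneg hε hε) h1]
end
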